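/- arXiv:2604.01833 — 4 statements merged into one kernel-verified Lean document; each statement's English description precedes it below -/
import Mathlib

section
/- Let E be a finite-dimensional real inner product space and A, B : E → E symmetric linear maps. Suppose A commutes with every orthogonal transformation of E that commutes with B; that is, for every linear isometry equivalence G : E ≃ E with G ∘ B = B ∘ G one has G ∘ A = A ∘ G. Then A ∘ B = B ∘ A, and there exists a function f : ℝ → ℝ such that for every λ ∈ ℝ and every v ∈ E with B v = λ • v, one has A v = f(λ) • v. -/
/-!
For an eigenvector `v` of `B`, the line `ℝ ∙ v` and its orthogonal complement are `B`-invariant,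
so the reflection in that line is an orthogonal transformation commuting with `B`. Hence `A`
commutes with it and preserves its fixed line: every eigenvector of `B` is an eigenvector of `A`.
An endomorphism of an eigenspace for which every vector is an eigenvector is a homothety, which
gives `f`; and since `B` has an orthonormal eigenbasis, `A` preserving its eigenspaces commutes
with `B`.
-/

open scoped RealInnerProductSpace
open Module.End

section

variable {K V : Type*} [Field K] [AddCommGroup V] [Module K V]

theorem Module.End.span_singleton_mem_invtSubmodule {T : Module.End K V} {v : V} {μ : K}
    (hv : T v = μ • v) : (K ∙ v) ∈ T.invtSubmodule := by
  rw [mem_invtSubmodule, Submodule.span_singleton_le_iff_mem, Submodule.mem_comap, hv]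
  exact Submodule.smul_mem _ μ (Submodule.mem_span_singleton_self v)

theorem Module.End.exists_smul_of_forall_mem_span_singleton {T : Module.End K V}
    {p : Submodule K V}
    (h : ∀ v ∈ p, T v ∈ K ∙ v) : ∃ c : K, ∀ v ∈ p, T v = c • v := by
  have hp : ∀ v ∈ p, T v ∈ p := fun v hv =>
    (Submodule.span_singleton_le_iff_mem v p).mpr hv (h v hv)
  obtain ⟨c, hc⟩ := LinearMap.exists_eq_smul_id_of_forall_notLinearIndependent
    (f := T.restrict hp) fun v hv => by
      obtain ⟨a, ha⟩ := Submodule.mem_span_singleton.mp (h v v.2)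
      have hdep := LinearIndependent.pair_iff.mp hv a (-1) (by ext; simp [ha])
      norm_num at hdep
  exact ⟨c, fun v hv => congr_arg Subtype.val (LinearMap.congr_fun hc ⟨v, hv⟩)⟩

end

section

variable {𝕜 E : Type*} [RCLike 𝕜] [NormedAddCommGroup E] [InnerProductSpace 𝕜 E]

theorem LinearMap.IsSymmetric.reflection_apply_comm {T : Module.End 𝕜 E} (hT : T.IsSymmetric)
    {K : Submodule 𝕜 E} [K.HasOrthogonalProjection] (hK : K ∈ T.invtSubmodule) (w : E) :
    K.reflection (T w) = T (K.reflection w) := by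
  obtain ⟨y, hy, z, hz, rfl⟩ := K.exists_add_mem_mem_orthogonal w
  have hTz : T z ∈ Kᗮ := hT.orthogonalComplement_mem_invtSubmodule hK hz
  simp [K.reflection_mem_subspace_eq_self hy, K.reflection_mem_subspace_eq_self (hK hy),
    K.reflection_mem_subspace_orthogonalComplement_eq_neg hz,
    K.reflection_mem_subspace_orthogonalComplement_eq_neg hTz]

theorem Submodule.mem_invtSubmodule_of_reflection_apply_comm {T : Module.End 𝕜 E}
    {K : Submodule 𝕜 E} [K.HasOrthogonalProjection]
    (hT : ∀ w, K.reflection (T w) = T (K.reflection w)) : K ∈ T.invtSubmodule := fun x hx => by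
  rw [Submodule.mem_comap, ← K.reflection_eq_self_iff, hT, K.reflection_mem_subspace_eq_self hx]

theorem LinearMap.IsSymmetric.commute_of_forall_eigenspace_mem_invtSubmodule
    [FiniteDimensional 𝕜 E] {S T : Module.End 𝕜 E} (hT : T.IsSymmetric)
    (hS : ∀ μ, eigenspace T μ ∈ S.invtSubmodule) : Commute S T := by
  refine (hT.eigenvectorBasis rfl).toBasis.ext fun i => ?_
  have hi := hT.apply_eigenvectorBasis rfl i
  have hSi : T (S _) = _ := mem_eigenspace_iff.mp (hS _ (mem_eigenspace_iff.mpr hi))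
  simp only [OrthonormalBasis.coe_toBasis, Module.End.mul_apply, hi, map_smul, hSi]

end

theorem stmt_6_general {E : Type*} [NormedAddCommGroup E] [InnerProductSpace ℝ E]
    [FiniteDimensional ℝ E] (A B : E →ₗ[ℝ] E)
    (hB : ∀ u v : E, ⟪B u, v⟫ = ⟪u, B v⟫)
    (hcomm : ∀ G : E ≃ₗᵢ[ℝ] E, (∀ w : E, G (B w) = B (G w)) →
      (∀ w : E, G (A w) = A (G w))) :
    (∀ w : E, A (B w) = B (A w)) ∧
    ∃ f : ℝ → ℝ, ∀ (l : ℝ) (v : E), B v = l • v → A v = f l • v := by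
  have hB' : B.IsSymmetric := hB
  have hA_eigenvector : ∀ l v, B v = l • v → A v ∈ ℝ ∙ v := fun l v hv =>
    Submodule.mem_invtSubmodule_of_reflection_apply_comm
      (hcomm _ (hB'.reflection_apply_comm (span_singleton_mem_invtSubmodule hv)))
      (Submodule.mem_span_singleton_self v)
  choose f hf using fun l => exists_smul_of_forall_mem_span_singleton (T := A)
    (p := eigenspace B l) fun v hv => hA_eigenvector l v (mem_eigenspace_iff.mp hv)
  have hAB : Commute A B := hB'.commute_of_forall_eigenspace_mem_invtSubmodule fun l v hv => by
    rw [Submodule.mem_comap, hf l v hv]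
    exact Submodule.smul_mem _ _ hv
  exact ⟨fun w => LinearMap.congr_fun hAB.eq w, f,
    fun l v hv => hf l v (mem_eigenspace_iff.mpr hv)⟩

/-- If a symmetric linear map `A` commutes with every orthogonal transformation that
commutes with a symmetric linear map `B`, then `A` commutes with `B` and acts as a scalar
`f λ` on each eigenspace of `B` for `λ`. -/
theorem stmt_6 {E : Type*} [NormedAddCommGroup E] [InnerProductSpace ℝ E]
    [FiniteDimensional ℝ E] (A B : E →ₗ[ℝ] E)
    (hA : ∀ u v : E, ⟪A u, v⟫ = ⟪u, A v⟫)
    (hB : ∀ u v : E, ⟪B u, v⟫ = ⟪u, B v⟫)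
    (hcomm : ∀ G : E ≃ₗᵢ[ℝ] E, (∀ w : E, G (B w) = B (G w)) →
      (∀ w : E, G (A w) = A (G w))) :
    (∀ w : E, A (B w) = B (A w)) ∧
    ∃ f : ℝ → ℝ, ∀ (l : ℝ) (v : E), B v = l • v → A v = f l • v :=
  stmt_6_general A B hB hcomm
end

section
/- Let E be a finite-dimensional real inner product space and A, B : E → E symmetric linear maps such that for every linear isometry equivalence G : E ≃ E with G ∘ B = B ∘ G one has G ∘ A = A ∘ G. Then there exists an orthonormal basis (e_i) of E together with real numbers (σ_i) and (τ_i) such that B e_i = σ_i • e_i and A e_i = τ_i • e_i for every index i; moreover τ_i = τ_j whenever σ_i = σ_j. -/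
open scoped RealInnerProductSpace

/-!
If `u` is an eigenvector of the symmetric map `B`, the orthogonal reflection in the line `ℝ ∙ u`
commutes with `B`, hence by hypothesis with `A`; so `A u` is fixed by that reflection, i.e. lies on
`ℝ ∙ u`. Thus every eigenvector of `B` is an eigenvector of `A`. Applied to an orthonormal
eigenbasis of `B` this diagonalizes `A`, and applied to `b i + b j` when `σ i = σ j` it forces
`τ i = τ j` by linear independence.
-/

theorem LinearIndependent.eq_of_apply_add_eq_smul {ι R M : Type*} [Ring R] [AddCommGroup M]
    [Module R M] {v : ι → M} (hv : LinearIndependent R v) {i j : ι} (hij : i ≠ j)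
    {f : M →ₗ[R] M} {a b c : R} (hi : f (v i) = a • v i) (hj : f (v j) = b • v j)
    (hadd : f (v i + v j) = c • (v i + v j)) : a = b := by
  have hpair : LinearIndependent R ![v i, v j] :=
    LinearIndependent.pair_iff.mpr ((LinearIndepOn.pair_iff v hij).mp (hv.linearIndepOn _))
  rw [map_add, hi, hj, smul_add] at hadd
  obtain ⟨hac, hbc⟩ := hpair.eq_of_pair hadd
  rw [hac, hbc]

theorem Submodule.apply_mem_of_reflection_comm {𝕜 E : Type*} [RCLike 𝕜] [NormedAddCommGroup E]
    [InnerProductSpace 𝕜 E] {K : Submodule 𝕜 E} [K.HasOrthogonalProjection] {A : E →ₗ[𝕜] E}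
    (hA : ∀ w, K.reflection (A w) = A (K.reflection w)) {u : E} (hu : u ∈ K) : A u ∈ K := by
  rw [← reflection_eq_self_iff, hA, reflection_mem_subspace_eq_self hu]

namespace LinearMap.IsSymmetric

variable {E : Type*} [NormedAddCommGroup E] [InnerProductSpace ℝ E] {B : E →ₗ[ℝ] E}

theorem reflection_span_singleton_comm (hB : B.IsSymmetric) {u : E} {μ : ℝ}
    (hu : B u = μ • u) (w : E) :
    (ℝ ∙ u).reflection (B w) = B ((ℝ ∙ u).reflection w) := by
  have hinner : ⟪u, B w⟫ = μ * ⟪u, w⟫ := by rw [← hB, hu, real_inner_smul_left]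
  simp only [Submodule.reflection_singleton_apply, map_sub, map_nsmul, map_smul, hu, hinner,
    smul_smul]
  ring_nf

theorem exists_apply_eq_smul_of_isometry_comm (hB : B.IsSymmetric) {A : E →ₗ[ℝ] E}
    (hcomm : ∀ G : E ≃ₗᵢ[ℝ] E, (∀ w : E, G (B w) = B (G w)) → (∀ w : E, G (A w) = A (G w)))
    {u : E} {μ : ℝ} (hu : B u = μ • u) : ∃ c : ℝ, A u = c • u := by
  have hAu : A u ∈ ℝ ∙ u := Submodule.apply_mem_of_reflection_comm
    (hcomm _ (hB.reflection_span_singleton_comm hu)) (Submodule.mem_span_singleton_self u)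
  obtain ⟨c, hc⟩ := Submodule.mem_span_singleton.mp hAu
  exact ⟨c, hc.symm⟩

end LinearMap.IsSymmetric

theorem stmt_7_general {E : Type*} [NormedAddCommGroup E] [InnerProductSpace ℝ E]
    [FiniteDimensional ℝ E] (A B : E →ₗ[ℝ] E)
    (hB : ∀ u v : E, ⟪B u, v⟫ = ⟪u, B v⟫)
    (hcomm : ∀ G : E ≃ₗᵢ[ℝ] E, (∀ w : E, G (B w) = B (G w)) →
      (∀ w : E, G (A w) = A (G w))) :
    ∃ (b : OrthonormalBasis (Fin (Module.finrank ℝ E)) ℝ E)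
      (σ τ : Fin (Module.finrank ℝ E) → ℝ),
      (∀ i, B (b i) = σ i • b i) ∧
      (∀ i, A (b i) = τ i • b i) ∧
      (∀ i j, σ i = σ j → τ i = τ j) := by
  have hB : B.IsSymmetric := hB
  set b := hB.eigenvectorBasis rfl
  set σ := hB.eigenvalues rfl
  have hBb (i) : B (b i) = σ i • b i := hB.apply_eigenvectorBasis rfl i
  choose τ hAb using fun i ↦ hB.exists_apply_eq_smul_of_isometry_comm hcomm (hBb i)
  refine ⟨b, σ, τ, hBb, hAb, fun i j hσ ↦ ?_⟩
  rcases eq_or_ne i j with rfl | hij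
  · rfl
  have hBij : B (b i + b j) = σ i • (b i + b j) := by rw [map_add, hBb, hBb, hσ, smul_add]
  obtain ⟨c, hc⟩ := hB.exists_apply_eq_smul_of_isometry_comm hcomm hBij
  exact b.orthonormal.linearIndependent.eq_of_apply_add_eq_smul hij (hAb i) (hAb j) hc

/-- Under the hypotheses of the covariance-alignment theorem, there is an orthonormal
basis simultaneously diagonalizing `A` and `B`, where the eigenvalue of `A` depends only
on the eigenvalue of `B` (a well-defined transfer function). -/
theorem stmt_7 {E : Type*} [NormedAddCommGroup E] [InnerProductSpace ℝ E]
    [FiniteDimensional ℝ E] (A B : E →ₗ[ℝ] E)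
    (hA : ∀ u v : E, ⟪A u, v⟫ = ⟪u, A v⟫)
    (hB : ∀ u v : E, ⟪B u, v⟫ = ⟪u, B v⟫)
    (hcomm : ∀ G : E ≃ₗᵢ[ℝ] E, (∀ w : E, G (B w) = B (G w)) →
      (∀ w : E, G (A w) = A (G w))) :
    ∃ (b : OrthonormalBasis (Fin (Module.finrank ℝ E)) ℝ E)
      (σ τ : Fin (Module.finrank ℝ E) → ℝ),
      (∀ i, B (b i) = σ i • b i) ∧
      (∀ i, A (b i) = τ i • b i) ∧
      (∀ i j, σ i = σ j → τ i = τ j) :=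
  stmt_7_general A B hB hcomm
end

section
/- Let E be a measurable space, L a measurable space (the label space), and G : E → E a measurable map. Let step : E × E × L → E be measurable and satisfy step(G w, G x, y) = G (step(w, x, y)) for all w, x ∈ E and y ∈ L. Let ν be a probability measure on E with Measure.map G ν = ν, let π be a probability measure on L, and let μ₀ be a probability measure on E with Measure.map G μ₀ = μ₀. Define recursively μ_{t+1} = Measure.map (fun p => step(p.1, p.2.1, p.2.2)) (μ_t.prod (ν.prod π)). Then for every t ∈ ℕ, Measure.map G μ_t = μ_t. -/
open MeasureTheory

/- The equivariance of `step` says that `step` intertwines the symmetry `G × G × id` of the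
input space with `G`. By induction the law of the weights is `G`-invariant, hence so is the
product law of (weights, data, label), and pushing an invariant law forward along an
intertwining map gives an invariant law. -/

theorem MeasureTheory.MeasurePreserving.map_prod_of_semiconj {W X : Type*}
    [MeasurableSpace W] [MeasurableSpace X] {μ : Measure W} {ρ : Measure X} [SFinite μ]
    [SFinite ρ] {f : W × X → W} (hf : Measurable f) {G : W → W} {H : X → X}
    (hG : MeasurePreserving G μ μ) (hH : MeasurePreserving H ρ ρ)
    (hfG : Function.Semiconj f (Prod.map G H) G) :
    MeasurePreserving G ((μ.prod ρ).map f) ((μ.prod ρ).map f) :=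
  (hf.measurePreserving _).of_semiconj (hG.prod hH) hfG hG.measurable

/-- Inductive invariance of the weight law under a symmetry `G` of the data
distribution, for a `G`-equivariant SGD step with input-independent random labels. -/
theorem stmt_12 {E L : Type*} [MeasurableSpace E] [MeasurableSpace L]
    (G : E → E) (hGmeas : Measurable G)
    (step : E × E × L → E) (hstepMeas : Measurable step)
    (hequiv : ∀ (w x : E) (y : L), step (G w, G x, y) = G (step (w, x, y)))
    (ν : Measure E) [IsProbabilityMeasure ν] (hν : Measure.map G ν = ν)
    (π : Measure L) [IsProbabilityMeasure π]
    (μ₀ : Measure E) [IsProbabilityMeasure μ₀] (hμ₀ : Measure.map G μ₀ = μ₀)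
    (μ : ℕ → Measure E) (hinit : μ 0 = μ₀)
    (hrec : ∀ t : ℕ, μ (t + 1) =
      Measure.map (fun p : E × E × L => step (p.1, p.2.1, p.2.2)) ((μ t).prod (ν.prod π))) :
    ∀ t : ℕ, Measure.map G (μ t) = μ t := by
  have hdata : MeasurePreserving (Prod.map G id) (ν.prod π) (ν.prod π) :=
    MeasurePreserving.prod ⟨hGmeas, hν⟩ (.id π)
  have hstep_equiv : Function.Semiconj step (Prod.map G (Prod.map G id)) G :=
    fun p => hequiv p.1 p.2.1 p.2.2
  suffices h : ∀ t, SFinite (μ t) ∧ MeasurePreserving G (μ t) (μ t) from fun t => (h t).2.map_eq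
  intro t
  induction t with
  | zero => exact hinit ▸ ⟨inferInstance, hGmeas, hμ₀⟩
  | succ t ih =>
    obtain ⟨_, hμt⟩ := ih
    rw [hrec t]
    exact ⟨inferInstance, hμt.map_prod_of_semiconj hstepMeas hdata hstep_equiv⟩
end

section
/- Let E be a finite-dimensional real inner product space (with its Borel σ-algebra), B : E → E a symmetric linear map, and μ a probability measure on E with finite second moment, ∫ ‖w‖² dμ(w) < ∞. Suppose μ is invariant under every orthogonal transformation of E commuting with B: for every linear isometry equivalence G : E ≃ E with G ∘ B = B ∘ G, Measure.map G μ = μ. Let C : E → E be a linear map satisfying ⟪C u, v⟫ = ∫ ⟪u, w⟫ · ⟪v, w⟫ dμ(w) for all u, v ∈ E. Then C is symmetric, C ∘ B = B ∘ C, and there exists a function f : ℝ → ℝ such that C v = f(λ) • v for every λ ∈ ℝ and every v ∈ E with B v = λ • v. -/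
/-!
Every reflection in the hyperplane orthogonal to an eigenvector `v` of `B` commutes with `B`, so
it preserves `μ` and hence commutes with the covariance `C`. Since that reflection negates `v`,
so does it negate `C v`, which forces `C v ∈ ℝ ∙ v`. Two eigenvectors `u, v` of equal norm for the
same eigenvalue are exchanged by the reflection in `(u - v)ᗮ`, which again commutes with `B`;
hence `C` has the same eigenvalue on both, and so acts as a scalar on each eigenspace of `B`.
Commutation of `C` with `B` follows by testing on an orthonormal eigenbasis of `B`.
-/

open MeasureTheory Submodule
open scoped RealInnerProductSpace

section

variable {E : Type*} [NormedAddCommGroup E] [InnerProductSpace ℝ E]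

lemma reflection_orthogonal_singleton_apply (v w : E) :
    reflection (ℝ ∙ v)ᗮ w = w - (2 * (⟪v, w⟫ / ‖v‖ ^ 2)) • v := by
  rw [reflection_orthogonal_apply, reflection_singleton_apply]
  norm_num [two_smul, two_mul, add_smul]

lemma LinearMap.IsSymmetric.reflection_orthogonal_singleton_apply_comm {B : E →ₗ[ℝ] E}
    (hB : B.IsSymmetric) {v : E} {l : ℝ} (hv : B v = l • v) (w : E) :
    reflection (ℝ ∙ v)ᗮ (B w) = B (reflection (ℝ ∙ v)ᗮ w) := by
  rw [reflection_orthogonal_singleton_apply, reflection_orthogonal_singleton_apply, map_sub,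
    map_smul, hv, real_inner_comm (B w), hB, hv, real_inner_smul_right, real_inner_comm v,
    smul_smul]
  ring_nf

lemma LinearMap.exists_smul_of_comm_reflection {C : E →ₗ[ℝ] E} {v : E}
    (hC : ∀ w, C (reflection (ℝ ∙ v)ᗮ w) = reflection (ℝ ∙ v)ᗮ (C w)) :
    ∃ c : ℝ, C v = c • v := by
  have hneg : reflection (ℝ ∙ v)ᗮ (C v) = -C v := by
    rw [← hC, reflection_orthogonalComplement_singleton_eq_neg, map_neg]
  have hfix : reflection (ℝ ∙ v) (C v) = C v := by
    rw [← neg_inj, ← reflection_orthogonal_apply, hneg]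
  obtain ⟨c, hc⟩ := mem_span_singleton.mp ((reflection_eq_self_iff _).mp hfix)
  exact ⟨c, hc.symm⟩

lemma LinearMap.apply_eq_smul_of_comm_reflection_sub {C : E →ₗ[ℝ] E} {u v : E} {c : ℝ}
    (huv : ‖u‖ = ‖v‖)
    (hC : ∀ w, C (reflection (ℝ ∙ (u - v))ᗮ w) = reflection (ℝ ∙ (u - v))ᗮ (C w))
    (hu : C u = c • u) : C v = c • v := by
  rw [← reflection_sub huv, hC, hu, map_smul]

lemma LinearMap.IsSymmetric.exists_smul_on_eigenspace {B C : E →ₗ[ℝ] E} (hB : B.IsSymmetric)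
    (hC : ∀ G : E ≃ₗᵢ[ℝ] E, (∀ w, G (B w) = B (G w)) → ∀ w, C (G w) = G (C w)) (l : ℝ) :
    ∃ c : ℝ, ∀ v, B v = l • v → C v = c • v := by
  have hrefl {v : E} (hv : B v = l • v) :
      ∀ w, C (reflection (ℝ ∙ v)ᗮ w) = reflection (ℝ ∙ v)ᗮ (C w) :=
    hC _ (hB.reflection_orthogonal_singleton_apply_comm hv)
  by_cases h : ∃ v₀, B v₀ = l • v₀ ∧ v₀ ≠ 0
  · obtain ⟨v₀, hv₀, hv₀0⟩ := h
    obtain ⟨c, hc⟩ := LinearMap.exists_smul_of_comm_reflection (hrefl hv₀)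
    refine ⟨c, fun v hv => ?_⟩
    set u := (‖v‖ / ‖v₀‖) • v₀
    have hu : B u = l • u := by rw [map_smul, hv₀, smul_comm]
    have hnorm : ‖u‖ = ‖v‖ := by
      rw [norm_smul, Real.norm_of_nonneg (by positivity),
        div_mul_cancel₀ _ (norm_ne_zero_iff.mpr hv₀0)]
    have hBuv : B (u - v) = l • (u - v) := by rw [map_sub, hu, hv, smul_sub]
    refine LinearMap.apply_eq_smul_of_comm_reflection_sub hnorm (hrefl hBuv) ?_
    rw [map_smul, hc, smul_comm]
  · refine ⟨0, fun v hv => ?_⟩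
    obtain rfl : v = 0 := by_contra fun hv0 => h ⟨v, hv, hv0⟩
    simp

lemma LinearMap.IsSymmetric.comm_of_apply_eigenvector [FiniteDimensional ℝ E]
    {B C : E →ₗ[ℝ] E} (hB : B.IsSymmetric) {f : ℝ → ℝ}
    (hf : ∀ (l : ℝ) (v : E), B v = l • v → C v = f l • v) (w : E) :
    C (B w) = B (C w) := by
  suffices C ∘ₗ B = B ∘ₗ C from LinearMap.congr_fun this w
  refine (hB.eigenvectorBasis rfl).toBasis.ext fun i => ?_
  have hBi := hB.apply_eigenvectorBasis rfl i
  simp only [OrthonormalBasis.coe_toBasis, LinearMap.comp_apply]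
  rw [hBi, map_smul, hf _ _ hBi, map_smul, hBi, smul_comm]

section Covariance

variable [MeasurableSpace E] {μ : Measure E} {C : E →ₗ[ℝ] E}

lemma covariance_symm (hC : ∀ u v : E, ⟪C u, v⟫ = ∫ w, ⟪u, w⟫ * ⟪v, w⟫ ∂μ) (u v : E) :
    ⟪C u, v⟫ = ⟪u, C v⟫ := by
  rw [hC, real_inner_comm, hC]
  simp_rw [mul_comm]

lemma covariance_comm_of_map_eq [BorelSpace E]
    (hC : ∀ u v : E, ⟪C u, v⟫ = ∫ w, ⟪u, w⟫ * ⟪v, w⟫ ∂μ)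
    (G : E ≃ₗᵢ[ℝ] E) (hG : μ.map G = μ) (u : E) : C (G u) = G (C u) := by
  have hinner (x : E) : ⟪C (G u), G x⟫ = ⟪C u, x⟫ := by
    rw [hC, hC]
    calc ∫ w, ⟪G u, w⟫ * ⟪G x, w⟫ ∂μ = ∫ w, ⟪G u, w⟫ * ⟪G x, w⟫ ∂μ.map G := by rw [hG]
      _ = ∫ w, ⟪G u, G w⟫ * ⟪G x, G w⟫ ∂μ := integral_map_equiv G.toMeasurableEquiv _
      _ = ∫ w, ⟪u, w⟫ * ⟪x, w⟫ ∂μ := by simp only [LinearIsometryEquiv.inner_map_map]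
  refine ext_inner_right ℝ fun y => ?_
  rw [LinearIsometryEquiv.inner_map_eq_flip, ← hinner, LinearIsometryEquiv.apply_symm_apply]

end Covariance

end

theorem stmt_14_general {E : Type*} [NormedAddCommGroup E] [InnerProductSpace ℝ E]
    [FiniteDimensional ℝ E] [MeasurableSpace E] [BorelSpace E]
    (B : E →ₗ[ℝ] E) (hB : ∀ u v : E, ⟪B u, v⟫ = ⟪u, B v⟫)
    (μ : Measure E)
    (hinv : ∀ G : E ≃ₗᵢ[ℝ] E, (∀ w : E, G (B w) = B (G w)) → Measure.map G μ = μ)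
    (C : E →ₗ[ℝ] E)
    (hC : ∀ u v : E, ⟪C u, v⟫ = ∫ w, ⟪u, w⟫ * ⟪v, w⟫ ∂μ) :
    (∀ u v : E, ⟪C u, v⟫ = ⟪u, C v⟫) ∧
    (∀ w : E, C (B w) = B (C w)) ∧
    ∃ f : ℝ → ℝ, ∀ (l : ℝ) (v : E), B v = l • v → C v = f l • v := by
  have hB : B.IsSymmetric := hB
  choose f hf using hB.exists_smul_on_eigenspace
    fun G hG => covariance_comm_of_map_eq hC G (hinv G hG)
  exact ⟨covariance_symm hC, hB.comm_of_apply_eigenvector hf, f, hf⟩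

/-- Distribution-level covariance alignment: if the weight law `μ` is invariant under
every orthogonal transformation commuting with the symmetric map `B`, then its covariance
operator `C` is symmetric, commutes with `B`, and acts as a scalar `f λ` on each
eigenspace of `B`. -/
theorem stmt_14 {E : Type*} [NormedAddCommGroup E] [InnerProductSpace ℝ E]
    [FiniteDimensional ℝ E] [MeasurableSpace E] [BorelSpace E]
    (B : E →ₗ[ℝ] E) (hB : ∀ u v : E, ⟪B u, v⟫ = ⟪u, B v⟫)
    (μ : Measure E) [IsProbabilityMeasure μ]
    (hmom : Integrable (fun w : E => ‖w‖ ^ 2) μ)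
    (hinv : ∀ G : E ≃ₗᵢ[ℝ] E, (∀ w : E, G (B w) = B (G w)) → Measure.map G μ = μ)
    (C : E →ₗ[ℝ] E)
    (hC : ∀ u v : E, ⟪C u, v⟫ = ∫ w, ⟪u, w⟫ * ⟪v, w⟫ ∂μ) :
    (∀ u v : E, ⟪C u, v⟫ = ⟪u, C v⟫) ∧
    (∀ w : E, C (B w) = B (C w)) ∧
    ∃ f : ℝ → ℝ, ∀ (l : ℝ) (v : E), B v = l • v → C v = f l • v :=
  stmt_14_general B hB μ hinv C hC
end
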